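/- Let S be a semidiscrete semigroup of Möbius transformations, let x ∈ ℝ̄, and let w ∈ ℍ be a point not fixed by any nonidentity element of S. Then x belongs to the closure in ℂ̄ of the Dirichlet region D_w(S) if and only if the S-orbit {g(w) : g ∈ S} does not meet the horodisc H_x(w) based at x whose boundary horocycle passes through w. -/

import Mathlib

open Filter Topology

noncomputable section

namespace MobiusSG

/-- The extended complex plane (Riemann sphere), with the one-point
compactification topology (which agrees with the chordal topology). -/
abbrev CHat : Type := OnePoint ℂ

/-- Self-maps of the extended complex plane. -/
abbrev MoebMap : Type := CHat → CHat

/-- The chordal metric χ on the extended complex plane. -/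
def chordal : CHat → CHat → ℝ
  | OnePoint.some z, OnePoint.some w =>
      2 * ‖z - w‖ /
        (Real.sqrt (1 + ‖z‖ ^ 2) * Real.sqrt (1 + ‖w‖ ^ 2))
  | OnePoint.some z, OnePoint.infty => 2 / Real.sqrt (1 + ‖z‖ ^ 2)
  | OnePoint.infty, OnePoint.some w => 2 / Real.sqrt (1 + ‖w‖ ^ 2)
  | OnePoint.infty, OnePoint.infty => 0

/-- The Möbius transformation z ↦ (az+b)/(cz+d), as a self-map of the sphere. -/
def mobiusFun (a b c d : ℝ) : MoebMap := fun z =>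
  match z with
  | OnePoint.infty =>
      if c = 0 then OnePoint.infty else OnePoint.some ((a : ℂ) / (c : ℂ))
  | OnePoint.some z =>
      if (c : ℂ) * z + (d : ℂ) = 0 then OnePoint.infty
      else OnePoint.some (((a : ℂ) * z + (b : ℂ)) / ((c : ℂ) * z + (d : ℂ)))

/-- The group 𝓜 of real Möbius transformations z ↦ (az+b)/(cz+d), ad − bc > 0. -/
def Mob : Set MoebMap :=
  {f | ∃ a b c d : ℝ, 0 < a * d - b * c ∧ f = mobiusFun a b c d}

/-- The uniform metric χ₀ on 𝓜. -/
def mDist (f g : MoebMap) : ℝ := ⨆ z : CHat, chordal (f z) (g z)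

/-- The upper half-plane ℍ, as a subset of ℂ. -/
def UHP : Set ℂ := {z | 0 < z.im}

/-- The extended real line ℝ̄ = ℝ ∪ {∞}, as a subset of the sphere. -/
def RExt : Set CHat :=
  {p | p = OnePoint.infty ∨ ∃ x : ℝ, p = OnePoint.some (x : ℂ)}

/-- The closed upper half-plane ℍ̄ = ℍ ∪ ℝ̄, as a subset of the sphere. -/
def HBar : Set CHat :=
  {p | p = OnePoint.infty ∨ ∃ z : ℂ, 0 ≤ z.im ∧ p = OnePoint.some z}

/-- Finite part of a point of the sphere (junk value 0 at ∞). -/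
def toC : CHat → ℂ
  | OnePoint.infty => 0
  | OnePoint.some z => z

/-- The hyperbolic metric ρ on the upper half-plane. -/
def hypDist (z w : ℂ) : ℝ :=
  2 * Real.arsinh (‖z - w‖ / (2 * Real.sqrt (z.im * w.im)))

/-- A semigroup: a nonempty subset of 𝓜 closed under composition. -/
def IsSemigroupOn (S : Set MoebMap) : Prop :=
  S.Nonempty ∧ S ⊆ Mob ∧ ∀ f ∈ S, ∀ g ∈ S, f ∘ g ∈ S

/-- S is semidiscrete: the identity is not an accumulation point of S in (𝓜, χ₀). -/
def Semidiscrete (S : Set MoebMap) : Prop :=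
  ¬ ∀ ε : ℝ, 0 < ε → ∃ f ∈ S, f ≠ id ∧ mDist f id < ε

/-- S is inverse free: no member of S has its inverse in S. -/
def InverseFree (S : Set MoebMap) : Prop :=
  ∀ f ∈ S, ∀ g ∈ S, f ∘ g ≠ id

/-- Membership in the semigroup generated by F. -/
inductive GenBy (F : Set MoebMap) : MoebMap → Prop
  | base {f : MoebMap} : f ∈ F → GenBy F f
  | comp {f g : MoebMap} : GenBy F f → GenBy F g → GenBy F (f ∘ g)

/-- The semigroup generated by F: all finite compositions of members of F. -/
def semigroupGen (F : Set MoebMap) : Set MoebMap := {f | GenBy F f}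

/-- Membership in the group generated (as a group) by F. -/
inductive GrpGenBy (F : Set MoebMap) : MoebMap → Prop
  | one : GrpGenBy F id
  | base {f : MoebMap} : f ∈ F → GrpGenBy F f
  | comp {f g : MoebMap} : GrpGenBy F f → GrpGenBy F g → GrpGenBy F (f ∘ g)
  | inv {f g : MoebMap} : GrpGenBy F f → f ∘ g = id → g ∘ f = id → GrpGenBy F g

/-- The group generated (as a group) by F. -/
def groupGen (F : Set MoebMap) : Set MoebMap := {f | GrpGenBy F f}

/-- (Fs n) is a composition sequence generated by F: Fs n = f 0 ∘ f 1 ∘ ⋯ ∘ f n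
with each f i ∈ F. -/
def IsCompSeq (F : Set MoebMap) (Fs : ℕ → MoebMap) : Prop :=
  ∃ f : ℕ → MoebMap, (∀ n, f n ∈ F) ∧ Fs 0 = f 0 ∧ ∀ n, Fs (n + 1) = Fs n ∘ f (n + 1)

/-- (Fs n) is an escaping sequence: for some w ∈ ℍ the orbit (Fs n w) does not
accumulate in ℍ. -/
def Escaping (Fs : ℕ → MoebMap) : Prop :=
  ∃ w : ℂ, w ∈ UHP ∧
    ¬ ∃ z : ℂ, z ∈ UHP ∧ MapClusterPt z atTop fun n => toC (Fs n (OnePoint.some w))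

/-- (Fs n) is an escaping sequence converging ideally to the point p of ℝ̄,
i.e. Fs n w → p in the chordal metric. -/
def ConvergesIdeallyTo (Fs : ℕ → MoebMap) (p : CHat) : Prop :=
  Escaping Fs ∧ p ∈ RExt ∧
    ∃ w : ℂ, w ∈ UHP ∧
      Tendsto (fun n => chordal (Fs n (OnePoint.some w)) p) atTop (nhds 0)

/-- A discrete subset of (𝓜, χ₀). -/
def IsDiscreteSet (S : Set MoebMap) : Prop :=
  ∀ f ∈ S, ∃ ε : ℝ, 0 < ε ∧ ∀ g ∈ S, g ≠ f → ε ≤ mDist g f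

/-- S is a group of Möbius maps. -/
def IsGroupOn (S : Set MoebMap) : Prop :=
  id ∈ S ∧ (∀ f ∈ S, ∀ g ∈ S, f ∘ g ∈ S) ∧
    ∀ f ∈ S, ∃ g ∈ S, f ∘ g = id ∧ g ∘ f = id

/-- S is a cocompact Fuchsian group: a discrete group of Möbius transformations
such that ℍ/S is compact (equivalently, some compact subset of ℍ has its
S-orbit covering ℍ). -/
def IsCocompactFuchsian (S : Set MoebMap) : Prop :=
  S ⊆ Mob ∧ IsGroupOn S ∧ IsDiscreteSet S ∧
    ∃ D : Set ℂ, IsCompact D ∧ D ⊆ UHP ∧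
      ∀ z ∈ UHP, ∃ g ∈ S, ∃ w ∈ D, g (OnePoint.some w) = OnePoint.some z

/-- The set S⁻¹ of inverses of members of S. -/
def invSet (S : Set MoebMap) : Set MoebMap :=
  {g | ∃ f ∈ S, f ∘ g = id ∧ g ∘ f = id}

/-- The forward limit set Λ⁺(S): accumulation points in ℝ̄ of the orbit of i. -/
def fwdLimitSet (S : Set MoebMap) : Set CHat :=
  {p | p ∈ RExt ∧ ∀ ε : ℝ, 0 < ε →
    ∃ g ∈ S, g (OnePoint.some Complex.I) ≠ p ∧
      chordal (g (OnePoint.some Complex.I)) p < ε}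

/-- The backward limit set Λ⁻(S) = Λ⁺(S⁻¹). -/
def bwdLimitSet (S : Set MoebMap) : Set CHat := fwdLimitSet (invSet S)

/-- S is elementary: it has a finite orbit in ℍ̄. -/
def Elementary (S : Set MoebMap) : Prop :=
  ∃ p ∈ HBar, ((fun g : MoebMap => g p) '' S).Finite

/-- The segment [0,1] of ℝ̄. -/
def unitClosedSeg : Set CHat := {p | ∃ x : ℝ, 0 ≤ x ∧ x ≤ 1 ∧ p = OnePoint.some (x : ℂ)}

/-- The segment (0,1) of ℝ̄. -/
def unitOpenSeg : Set CHat := {p | ∃ x : ℝ, 0 < x ∧ x < 1 ∧ p = OnePoint.some (x : ℂ)}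

/-- A closed interval of ℝ̄: a closed arc, neither a singleton nor all of ℝ̄;
equivalently, a Möbius image of [0,1]. -/
def IsClosedInterval (J : Set CHat) : Prop := ∃ g ∈ Mob, J = g '' unitClosedSeg

/-- An open interval of ℝ̄: a Möbius image of (0,1). -/
def IsOpenInterval (J : Set CHat) : Prop := ∃ g ∈ Mob, J = g '' unitOpenSeg

/-- f maps J strictly inside itself. -/
def StrictlyInside (f : MoebMap) (J : Set CHat) : Prop := f '' J ⊆ J ∧ f '' J ≠ J

/-- 𝓜(J): the Möbius transformations mapping J within itself. -/
def MobOf (J : Set CHat) : Set MoebMap := {f | f ∈ Mob ∧ f '' J ⊆ J}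

/-- S is dense in 𝓜. -/
def DenseInMob (S : Set MoebMap) : Prop :=
  ∀ f ∈ Mob, ∀ ε : ℝ, 0 < ε → ∃ g ∈ S, mDist g f < ε

/-- The Dirichlet region of S centred at w. -/
def DirichletRegion (S : Set MoebMap) (w : ℂ) : Set ℂ :=
  {z | z ∈ UHP ∧ ∀ g ∈ S, g ≠ id → hypDist z w ≤ hypDist z (toC (g (OnePoint.some w)))}

/-- The (open) horodisc based at x ∈ ℝ̄ whose boundary horocycle passes
through w ∈ ℍ. -/
def horodisc (x : CHat) (w : ℂ) : Set ℂ :=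
  match x with
  | OnePoint.infty => {z | w.im < z.im}
  | OnePoint.some p =>
      {z | ‖z - (p + Complex.I * ((‖w - p‖ ^ 2 / (2 * w.im) : ℝ) : ℂ))‖ <
          ‖w - p‖ ^ 2 / (2 * w.im)}

/-- The forward horocyclic limit set Λ_h⁺(S): points x of Λ⁺(S) such that every
orbit meets every horodisc based at x. -/
def horocyclicFwdLimitSet (S : Set MoebMap) : Set CHat :=
  {x | x ∈ fwdLimitSet S ∧ ∀ w ∈ UHP, ∀ u ∈ UHP,
    ∃ g ∈ S, toC (g (OnePoint.some w)) ∈ horodisc x u}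

/-- The end points of an interval J of ℝ̄ (its boundary within ℝ̄). -/
def endpointsOf (J : Set CHat) : Set CHat := {p | p ∈ J ∧ p ∈ closure (RExt \ J)}

/-- S is finitely generated. -/
def FinGen (S : Set MoebMap) : Prop :=
  ∃ F : Set MoebMap, F.Finite ∧ F.Nonempty ∧ S = semigroupGen F

/-- S is exceptional: S ⊆ 𝓜(J) for a closed interval J, the members of S fixing
J setwise form a nontrivial discrete group, and some member of S outside this
group fixes an end point of J. -/
def Exceptional (S : Set MoebMap) : Prop :=
  ∃ J : Set CHat, IsClosedInterval J ∧ (∀ f ∈ S, f '' J ⊆ J) ∧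
    (∃ g ∈ {g ∈ S | g '' J = J}, g ≠ id) ∧
    IsGroupOn {g ∈ S | g '' J = J} ∧ IsDiscreteSet {g ∈ S | g '' J = J} ∧
    ∃ f ∈ S, f '' J ≠ J ∧ ∃ p ∈ endpointsOf J, f p = p

/-- f is elliptic: a nonidentity map fixing a point of ℍ. -/
def Elliptic (f : MoebMap) : Prop :=
  f ≠ id ∧ ∃ z : ℂ, z ∈ UHP ∧ f (OnePoint.some z) = OnePoint.some z

/-- f is parabolic: a nonidentity map whose only fixed point lies on ℝ̄. -/
def Parabolic (f : MoebMap) : Prop :=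
  f ≠ id ∧ ∃ p ∈ RExt, {q : CHat | f q = q} = {p}

/-- α and β are the attracting resp. repelling fixed points of the hyperbolic
map f: both lie on ℝ̄, and iterates of f attract everything except β to α. -/
def HypPair (f : MoebMap) (α β : CHat) : Prop :=
  α ≠ β ∧ α ∈ RExt ∧ β ∈ RExt ∧ f α = α ∧ f β = β ∧
    ∀ p : CHat, p ≠ β → Tendsto (fun n => chordal (f^[n] p) α) atTop (nhds 0)

/-- f is hyperbolic. -/
def Hyperbolic (f : MoebMap) : Prop := ∃ α β : CHat, HypPair f α β

/-- Difference of two points of ℝ̄ (with the usual conventions about ∞, for use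
in the cross-ratio: any factor involving ∞ is replaced by 1). -/
def dR : CHat → CHat → ℝ
  | OnePoint.some x, OnePoint.some y => x.re - y.re
  | _, _ => 1

/-- The cross ratio C(f,g) = (αf−αg)(βf−βg)/((αf−βg)(βf−αg)). -/
def crossC (αf αg βf βg : CHat) : ℝ :=
  (dR αf αg * dR βf βg) / (dR αf βg * dR βf αg)

/-- tr[f,g]: the absolute trace of the commutator F G F⁻¹ G⁻¹ of normalized
(det = 1) matrix representatives. -/
def trComm (a b c d a' b' c' d' : ℝ) : ℝ :=
  |Matrix.trace (!![a, b; c, d] * !![a', b'; c', d'] *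
    !![d, -b; -c, a] * !![d', -b'; -c', a'])|

/-- f and g (parabolic or hyperbolic, with no common fixed point, with
attracting fixed points αf, αg) are antiparallel: neither closed interval
with end points αf and αg is mapped strictly inside itself by both f and g. -/
def Antiparallel (f g : MoebMap) (αf αg : CHat) : Prop :=
  ({p : CHat | f p = p} ∩ {p : CHat | g p = p} = ∅) ∧
    ∀ J : Set CHat, IsClosedInterval J → endpointsOf J = {αf, αg} →
      ¬ (StrictlyInside f J ∧ StrictlyInside g J)

/-- G is a Schottky group of rank two. -/
def SchottkyRank2 (G : Set MoebMap) : Prop :=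
  ∃ p ∈ Mob, ∃ q ∈ Mob, ∃ A B C D : Set CHat,
    IsOpenInterval A ∧ IsOpenInterval B ∧ IsOpenInterval C ∧ IsOpenInterval D ∧
    Disjoint A B ∧ Disjoint A C ∧ Disjoint A D ∧
    Disjoint B C ∧ Disjoint B D ∧ Disjoint C D ∧
    p '' (RExt \ closure A) ⊆ B ∧ q '' (RExt \ closure C) ⊆ D ∧
    G = groupGen {p, q}

/-- S is semidiscrete and inverse free. -/
def SDIF (S : Set MoebMap) : Prop := Semidiscrete S ∧ InverseFree S

/-! Hyperbolic distance is invariant under `SL(2, ℝ)`, and `z ↦ (x - z)⁻¹` moves a real point `x`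
to `∞` and turns `H_x(w)` into the half-plane above the image of `w`; there, `x` lies in the
closure of `D_w(S)` exactly when the image of `D_w(S)` is unbounded. If some orbit point `u` lies
above `w`, the points at least as close to `w` as to `u` form a bounded set (their boundary is a
Euclidean semicircle). If no orbit point lies above `w`, the vertical ray upward from `w` stays in
`D_w(S)`: along it the distance to `w` is `log (Im z / Im w)`, while the distance to any `u` is at
least `log (Im z / Im u)`. -/

open scoped UpperHalfPlane
open Bornology Pointwise
open scoped MatrixGroups

lemma hypDist_coe (z w : ℍ) : hypDist z w = dist z w := by
  rw [UpperHalfPlane.dist_eq, hypDist, Complex.dist_eq]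
  rfl

lemma dist_le_dist_iff_dist_coe {z w u : ℍ} :
    dist z w ≤ dist z u ↔ dist (z : ℂ) w ^ 2 * u.im ≤ dist (z : ℂ) u ^ 2 * w.im := by
  rw [← abs_of_nonneg (dist_nonneg (x := z) (y := w)),
    ← abs_of_nonneg (dist_nonneg (x := z) (y := u)), ← Real.cosh_le_cosh,
    UpperHalfPlane.cosh_dist, UpperHalfPlane.cosh_dist, add_le_add_iff_left,
    div_le_div_iff₀ (by positivity) (by positivity)]
  have hz : 0 < 2 * z.im := by positivity
  constructor <;> intro h <;> nlinarith

lemma le_max_of_sq_mul_le_add_sq_mul {s e c d : ℝ} (he : 0 ≤ e) (hc : 0 ≤ c)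
    (hcd : c < d) (h : s ^ 2 * d ≤ (s + e) ^ 2 * c) :
    s ≤ max 1 ((2 * e * c + e ^ 2 * c) / (d - c)) := by
  rcases le_or_gt s 1 with hs1 | hs1
  · exact hs1.trans (le_max_left _ _)
  refine le_max_of_le_right ((le_div_iff₀ (by linarith)).2 ?_)
  nlinarith [mul_nonneg (mul_nonneg he he) hc, mul_nonneg he hc]

lemma isBounded_coe_setOf_dist_le_dist {w u : ℍ} (h : w.im < u.im) :
    IsBounded ((↑) '' {z : ℍ | dist z w ≤ dist z u} : Set ℂ) := by
  refine (Metric.isBounded_closedBall (x := (w : ℂ)) (r := max 1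
    ((2 * dist (w : ℂ) u * w.im + dist (w : ℂ) u ^ 2 * w.im) / (u.im - w.im)))).subset ?_
  rintro _ ⟨z, hz, rfl⟩
  rw [Metric.mem_closedBall]
  refine le_max_of_sq_mul_le_add_sq_mul (dist_nonneg (x := (w : ℂ)) (y := u))
    w.im_pos.le h ?_
  calc dist (z : ℂ) w ^ 2 * u.im ≤ dist (z : ℂ) u ^ 2 * w.im := dist_le_dist_iff_dist_coe.1 hz
    _ ≤ (dist (z : ℂ) w + dist (w : ℂ) u) ^ 2 * w.im := by
      gcongr
      exact dist_triangle _ _ _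

lemma dist_le_dist_of_re_eq {z w u : ℍ} (hre : z.re = w.re) (hwz : w.im ≤ z.im)
    (huw : u.im ≤ w.im) : dist z w ≤ dist z u := by
  have hlog_wz := Real.log_le_log w.im_pos hwz
  have hlog_uw := Real.log_le_log u.im_pos huw
  rw [UpperHalfPlane.dist_of_re_eq hre, Real.dist_eq, abs_of_nonneg (by linarith)]
  refine le_trans ?_ (UpperHalfPlane.dist_log_im_le z u)
  rw [Real.dist_eq, abs_of_nonneg (by linarith)]
  linarith

def voronoiCell {X : Type*} [PseudoMetricSpace X] (O : Set X) (w : X) : Set X :=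
  {z | ∀ u ∈ O, dist z w ≤ dist z u}

lemma smul_voronoiCell {G X : Type*} [Group G] [PseudoMetricSpace X] [MulAction G X]
    [IsIsometricSMul G X] (g : G) (O : Set X) (w : X) :
    g • voronoiCell O w = voronoiCell (g • O) (g • w) := by
  ext z
  have hdist (v : X) : dist (g⁻¹ • z) v = dist z (g • v) := by
    rw [← dist_smul g, smul_inv_smul]
  rw [Set.mem_smul_set_iff_inv_smul_mem, ← Set.image_smul]
  simp only [voronoiCell, Set.mem_ofPred_eq, Set.forall_mem_image, hdist]

lemma isBounded_voronoiCell_iff {O : Set ℍ} {w : ℍ} :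
    IsBounded ((↑) '' voronoiCell O w : Set ℂ) ↔ ∃ u ∈ O, w.im < u.im := by
  refine ⟨fun hb => ?_, fun ⟨u, hu, hwu⟩ =>
    (isBounded_coe_setOf_dist_le_dist hwu).subset (Set.image_mono fun z hz => hz u hu)⟩
  by_contra! hO
  obtain ⟨R, hR⟩ := isBounded_iff_forall_norm_le.1 hb
  have hy : w.im ≤ max w.im (R + 1) := le_max_left _ _
  let z : ℍ := ⟨⟨w.re, max w.im (R + 1)⟩, w.im_pos.trans_le hy⟩
  have hz : z ∈ voronoiCell O w := fun u hu => dist_le_dist_of_re_eq rfl hy (hO u hu)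
  have hzR := hR _ ⟨z, hz, rfl⟩
  have him : max w.im (R + 1) ≤ ‖(z : ℂ)‖ :=
    (le_abs_self _).trans (by exact Complex.abs_im_le_norm (z : ℂ))
  linarith [le_max_right w.im (R + 1)]

lemma infty_mem_closure_image_coe_iff {X : Type*} [PseudoMetricSpace X] [ProperSpace X]
    {s : Set X} : (OnePoint.infty : OnePoint X) ∈ closure ((↑) '' s) ↔ ¬ IsBounded s := by
  rw [mem_closure_iff_nhds_basis OnePoint.hasBasis_nhds_infty]
  simp only [Set.mem_image, Set.union_singleton, Set.mem_insert_iff, Set.mem_compl_iff,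
    exists_exists_and_eq_and, OnePoint.coe_ne_infty, OnePoint.some_eq_iff, exists_eq_right,
    false_or, and_imp]
  constructor
  · intro h hb
    obtain ⟨a, ha, haK⟩ := h _ isClosed_closure hb.isCompact_closure
    exact haK (subset_closure ha)
  · intro h K _ hK
    by_contra! hsK
    exact h (hK.isBounded.subset hsK)

lemma coe_mem_closure_image_coe_iff {X : Type*} [TopologicalSpace X] {s : Set X} {p : X} :
    (p : OnePoint X) ∈ closure ((↑) '' s) ↔ p ∈ closure s := by
  rw [OnePoint.isOpenEmbedding_coe.isEmbedding.closure_eq_preimage_closure_image s]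
  rfl

lemma mem_closure_iff_not_isBounded_image_inv_sub {𝕜 : Type*} [NormedField 𝕜] {s : Set 𝕜}
    {p : 𝕜} (hp : p ∉ s) : p ∈ closure s ↔ ¬ IsBounded ((fun z => (p - z)⁻¹) '' s) := by
  rw [Metric.mem_closure_iff, isBounded_iff_forall_norm_le]
  push Not
  simp only [Set.mem_image, exists_exists_and_eq_and, norm_inv, ← dist_eq_norm]
  have hpos (b : 𝕜) (hb : b ∈ s) : 0 < dist p b := dist_pos.2 (ne_of_mem_of_not_mem hb hp).symm
  constructor
  · intro h C
    obtain ⟨b, hb, hbC⟩ := h (|C| + 1)⁻¹ (by positivity)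
    have := (lt_inv_comm₀ (hpos b hb) (by positivity)).1 hbC
    exact ⟨b, hb, by linarith [le_abs_self C]⟩
  · intro h ε hε
    obtain ⟨b, hb, hbε⟩ := h ε⁻¹
    exact ⟨b, hb, (inv_lt_inv₀ hε (hpos b hb)).1 hbε⟩

def invSubSL (r : ℝ) : SL(2, ℝ) := ⟨!![0, 1; -1, r], by simp [Matrix.det_fin_two]⟩

lemma coe_invSubSL_smul (r : ℝ) (z : ℍ) : ((invSubSL r • z : ℍ) : ℂ) = ((r : ℂ) - z)⁻¹ := by
  rw [UpperHalfPlane.coe_specialLinearGroup_apply]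
  simp [invSubSL, neg_add_eq_sub]

lemma im_invSubSL_smul (r : ℝ) (z : ℍ) :
    (invSubSL r • z).im = z.im / Complex.normSq (r - z) := by
  rw [← UpperHalfPlane.coe_im, coe_invSubSL_smul, Complex.inv_im]
  simp

lemma normSq_ofReal_sub_pos (r : ℝ) (z : ℍ) : 0 < Complex.normSq ((r : ℂ) - z) :=
  Complex.normSq_pos.2 (sub_ne_zero.2 (z.ne_ofReal r).symm)

lemma mem_horodisc_coe_iff (r : ℝ) (w u : ℍ) :
    (u : ℂ) ∈ horodisc (OnePoint.some (r : ℂ)) w ↔ (invSubSL r • w).im < (invSubSL r • u).im := by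
  rw [im_invSubSL_smul, im_invSubSL_smul,
    div_lt_div_iff₀ (normSq_ofReal_sub_pos r w) (normSq_ofReal_sub_pos r u)]
  set k : ℝ := ‖(w : ℂ) - r‖ ^ 2 / (2 * w.im)
  have hk : k * (2 * w.im) = Complex.normSq ((r : ℂ) - w) := by
    rw [div_mul_cancel₀ _ (by positivity), ← Complex.sq_norm, norm_sub_rev]
  have hk0 : 0 < k := by nlinarith [normSq_ofReal_sub_pos r w, w.im_pos]
  show ‖(u : ℂ) - (r + Complex.I * k)‖ < k ↔ _
  rw [← sq_lt_sq₀ (norm_nonneg _) hk0.le, Complex.sq_norm]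
  simp only [Complex.normSq_apply, Complex.sub_re, Complex.ofReal_re, UpperHalfPlane.coe_re,
    Complex.sub_im, Complex.ofReal_im, UpperHalfPlane.coe_im, zero_sub, mul_neg, neg_mul, neg_neg,
    Complex.add_re, Complex.mul_re, Complex.I_re, zero_mul, Complex.I_im, mul_zero, sub_self,
    add_zero, Complex.add_im, Complex.mul_im, one_mul, zero_add] at hk ⊢
  rw [← hk]
  have hw := w.im_pos
  constructor <;> intro h <;> nlinarith

lemma notMem_horodisc_self {x : CHat} (hx : x ∈ RExt) (w : ℍ) : (w : ℂ) ∉ horodisc x w := by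
  rcases hx with rfl | ⟨r, rfl⟩
  · exact lt_irrefl (w : ℂ).im
  · rw [mem_horodisc_coe_iff]
    exact lt_irrefl _

lemma exists_eq_coe_of_mem_Mob {f : MoebMap} (hf : f ∈ Mob) (z : ℍ) :
    ∃ u : ℍ, f (z : ℂ) = ((u : ℂ) : CHat) := by
  obtain ⟨a, b, c, d, hdet, rfl⟩ := hf
  let g : GL (Fin 2) ℝ := Matrix.GeneralLinearGroup.mkOfDetNeZero !![a, b; c, d]
    (by rw [Matrix.det_fin_two_of]; exact hdet.ne')
  have hg : 0 < g.det.val := by simpa [g, Matrix.det_fin_two_of] using hdet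
  refine ⟨g • z, ?_⟩
  have hden := UpperHalfPlane.denom_ne_zero g z
  rw [UpperHalfPlane.coe_smul_of_det_pos hg]
  simpa [mobiusFun, UpperHalfPlane.num, UpperHalfPlane.denom, g] using hden

theorem mem_closure_voronoiCell_iff (O : Set ℍ) (w : ℍ) {x : CHat} (hx : x ∈ RExt) :
    x ∈ closure (OnePoint.some '' ((↑) '' voronoiCell O w)) ↔
      ∀ u ∈ O, (u : ℂ) ∉ horodisc x w := by
  rcases hx with rfl | ⟨r, rfl⟩
  · rw [infty_mem_closure_image_coe_iff, isBounded_voronoiCell_iff]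
    simp [horodisc]
  · have hr : (r : ℂ) ∉ (↑) '' voronoiCell O w := by
      rintro ⟨z, -, hz⟩
      exact z.ne_ofReal r hz
    have himage : (fun z : ℂ => ((r : ℂ) - z)⁻¹) '' ((↑) '' voronoiCell O w) =
        (↑) '' (invSubSL r • voronoiCell O w) := by
      rw [Set.image_image, ← Set.image_smul, Set.image_image]
      simp_rw [coe_invSubSL_smul]
    rw [coe_mem_closure_image_coe_iff, mem_closure_iff_not_isBounded_image_inv_sub hr, himage,
      smul_voronoiCell, isBounded_voronoiCell_iff]
    simp [mem_horodisc_coe_iff, Set.mem_smul_set]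

theorem statement7_general (S : Set MoebMap) (hS : IsSemigroupOn S)
    (x : CHat) (hx : x ∈ RExt) (w : ℂ) (hw : w ∈ UHP) :
    x ∈ closure (OnePoint.some '' DirichletRegion S w) ↔
      ∀ g ∈ S, toC (g (OnePoint.some w)) ∉ horodisc x w := by
  lift w to ℍ using hw
  set O : Set ℍ := {u | ∃ g ∈ S, g ≠ id ∧ g (w : ℂ) = ((u : ℂ) : CHat)}
  have hD : DirichletRegion S w = (↑) '' voronoiCell O w := by
    ext z
    constructor
    · rintro ⟨hz, hDz⟩
      refine ⟨⟨z, hz⟩, fun u ⟨g, hg, hne, hgu⟩ => ?_, rfl⟩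
      rw [← hypDist_coe, ← hypDist_coe]
      simpa [hgu, toC] using hDz g hg hne
    · rintro ⟨z, hz, rfl⟩
      refine ⟨z.im_pos, fun g hg hne => ?_⟩
      obtain ⟨u, hgu⟩ := exists_eq_coe_of_mem_Mob (hS.2.1 hg) w
      simpa [hgu, toC, hypDist_coe] using hz u ⟨g, hg, hne, hgu⟩
  have hO : (∀ g ∈ S, toC (g (w : ℂ)) ∉ horodisc x w) ↔ ∀ u ∈ O, (u : ℂ) ∉ horodisc x w := by
    refine ⟨fun h u ⟨g, hg, _, hgu⟩ => by simpa [hgu, toC] using h g hg, fun h g hg => ?_⟩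
    by_cases hid : g = id
    · simpa [hid, toC] using notMem_horodisc_self hx w
    obtain ⟨u, hgu⟩ := exists_eq_coe_of_mem_Mob (hS.2.1 hg) w
    simpa [hgu, toC] using h u ⟨g, hg, hid, hgu⟩
  rw [hD, hO, mem_closure_voronoiCell_iff O w hx]

/-- Theorem aaw: let S be a semidiscrete semigroup, x ∈ ℝ̄, and w ∈ ℍ a point
not fixed by any nonidentity element of S. Then x lies in the closure (in ℂ̄)
of the Dirichlet region D_w(S) if and only if the S-orbit of w does not meet
the horodisc H_x(w). -/
theorem statement7 (S : Set MoebMap) (hS : IsSemigroupOn S) (hsd : Semidiscrete S)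
    (x : CHat) (hx : x ∈ RExt) (w : ℂ) (hw : w ∈ UHP)
    (hfix : ∀ g ∈ S, g ≠ id → g (OnePoint.some w) ≠ OnePoint.some w) :
    x ∈ closure (OnePoint.some '' DirichletRegion S w) ↔
      ∀ g ∈ S, toC (g (OnePoint.some w)) ∉ horodisc x w :=
  statement7_general S hS x hx w hw

end MobiusSG

end
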